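/- arXiv:1704.00690 — 2 statements merged into one kernel-verified Lean document; each statement's English description precedes it below -/
import Mathlib

section
/- The number of solutions z ∈ F_2^n of the Hidden Linear Function problem for q equals |L_q^⊥|, the cardinality of the orthogonal complement of L_q. -/
open Finset

/-- The quadratic form q : F_2^n → Z_4. -/
def quadForm {n : ℕ} (A : Fin n → Fin n → ZMod 2) (b : Fin n → ZMod 2)
    (x : Fin n → ZMod 2) : ZMod 4 :=
  2 * ∑ p ∈ Finset.univ.filter (fun p : Fin n × Fin n => p.1 < p.2),
      ((A p.1 p.2).val : ZMod 4) * ((x p.1).val : ZMod 4) * ((x p.2).val : ZMod 4)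
  + ∑ α : Fin n, ((b α).val : ZMod 4) * ((x α).val : ZMod 4)

/-- The set L_q. -/
def Lset {n : ℕ} (A : Fin n → Fin n → ZMod 2) (b : Fin n → ZMod 2) :
    Set (Fin n → ZMod 2) :=
  {x | ∀ y, quadForm A b (x + y) = quadForm A b x + quadForm A b y}

/-- F_2 inner product. -/
def ip {n : ℕ} (z x : Fin n → ZMod 2) : ZMod 2 := ∑ α, z α * x α

/-- z is a solution of the Hidden Linear Function problem for q. -/
def IsSol {n : ℕ} (A : Fin n → Fin n → ZMod 2) (b : Fin n → ZMod 2)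
    (z : Fin n → ZMod 2) : Prop :=
  ∀ x ∈ Lset A b, quadForm A b x = 2 * ((ip z x).val : ZMod 4)

/-- Orthogonal complement of a set of vectors. -/
def perp {n : ℕ} (L : Set (Fin n → ZMod 2)) : Set (Fin n → ZMod 2) :=
  {y | ∀ x ∈ L, ip y x = 0}

/-! On `L_q` the form `q` is additive, and since `x ⊕ x = 0` its values there lie in the
2-torsion `{0, 2}` of `ℤ/4`; hence `q = 2ℓ` on `L_q` for an `𝔽₂`-linear functional `ℓ`.
Extending `ℓ` to `𝔽₂ⁿ` and writing it as `x ↦ z₀ᵀx` gives one solution `z₀`, and then `z` is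
a solution exactly when `z - z₀ ∈ L_q^⊥`, so the solutions form a coset of `L_q^⊥`. -/

section AdditivitySubgroup

variable {V M : Type*} [AddCommGroup V] [AddCommGroup M]

/-- The `L_q` of the paper: `Lset A b` is the carrier of `additivitySubgroup (quadForm A b) _`. -/
def additivitySubgroup (q : V → M) (hq : q 0 = 0) : AddSubgroup V where
  carrier := {x | ∀ y, q (x + y) = q x + q y}
  add_mem' {x x'} hx hx' y := by rw [add_assoc, hx, hx', hx, add_assoc]
  zero_mem' y := by rw [zero_add, hq, zero_add]
  neg_mem' {x} hx y := by
    have hy : q y = q x + q (-x + y) := by simpa using hx (-x + y)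
    have hneg : 0 = q x + q (-x) := by simpa [hq] using hx (-x)
    rw [eq_neg_of_add_eq_zero_right hneg.symm, eq_neg_add_of_add_eq hy.symm]

def additiveRestriction (q : V → M) (hq : q 0 = 0) : additivitySubgroup q hq →+ M where
  toFun x := q x
  map_zero' := hq
  map_add' x y := x.2 y

end AdditivitySubgroup

def twiceVal : ZMod 2 →+ ZMod 4 where
  toFun c := 2 * (c.val : ZMod 4)
  map_zero' := rfl
  map_add' := by decide

lemma twiceVal_injective : Function.Injective twiceVal := by decide

lemma mem_range_twiceVal_of_add_self_eq_zero {a : ZMod 4} (ha : a + a = 0) :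
    a ∈ twiceVal.range := by
  revert a
  simp only [AddMonoidHom.mem_range]
  decide

lemma exists_twiceVal_comp_eq {G : Type*} [AddCommGroup G] (f : G →+ ZMod 4)
    (hf : ∀ x, f x + f x = 0) : ∃ ℓ : G →+ ZMod 2, twiceVal.comp ℓ = f := by
  let e := AddMonoidHom.ofInjective twiceVal_injective
  refine ⟨(e.symm : twiceVal.range →+ ZMod 2).comp
    (f.codRestrict _ fun x => mem_range_twiceVal_of_add_self_eq_zero (hf x)), ?_⟩
  ext x
  exact congrArg Subtype.val (e.apply_symm_apply _)

theorem exists_eq_twiceVal_dotProduct_on_additivitySubgroup {ι : Type*} [Fintype ι] [DecidableEq ι]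
    (q : (ι → ZMod 2) → ZMod 4) (hq : q 0 = 0) :
    ∃ z, ∀ x ∈ additivitySubgroup q hq, q x = twiceVal (z ⬝ᵥ x) := by
  obtain ⟨ℓ, hℓ⟩ := exists_twiceVal_comp_eq (additiveRestriction q hq) fun x => by
    rw [← map_add, ZModModule.add_self, map_zero]
  obtain ⟨g, hg⟩ := LinearMap.exists_extend
    (p := AddSubgroup.toZModSubmodule 2 (additivitySubgroup q hq)) (ℓ.toZModLinearMap 2)
  refine ⟨(dotProductEquiv (ZMod 2) ι).symm g, fun x hx => ?_⟩
  have hgx : g x = ℓ ⟨x, hx⟩ := LinearMap.congr_fun hg ⟨x, hx⟩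
  rw [← dotProductEquiv_apply_apply, LinearEquiv.apply_symm_apply, hgx]
  exact (DFunLike.congr_fun hℓ ⟨x, hx⟩).symm

section HiddenLinearFunction

variable {n : ℕ} (A : Fin n → Fin n → ZMod 2) (b : Fin n → ZMod 2)

lemma quadForm_zero : quadForm A b 0 = 0 := by
  simp [quadForm]

lemma exists_isSol : ∃ z, IsSol A b z :=
  exists_eq_twiceVal_dotProduct_on_additivitySubgroup (quadForm A b) (quadForm_zero A b)

lemma isSol_iff_sub_mem_perp {z₀ : Fin n → ZMod 2} (hz₀ : IsSol A b z₀) (z : Fin n → ZMod 2) :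
    IsSol A b z ↔ z - z₀ ∈ perp (Lset A b) := by
  refine forall₂_congr fun x hx => ?_
  rw [hz₀ x hx]
  change twiceVal (z₀ ⬝ᵥ x) = twiceVal (z ⬝ᵥ x) ↔ (z - z₀) ⬝ᵥ x = 0
  rw [twiceVal_injective.eq_iff, sub_dotProduct, sub_eq_zero, eq_comm]

end HiddenLinearFunction

theorem card_solutions_eq_card_perp_general (n : ℕ)
    (A : Fin n → Fin n → ZMod 2) (b : Fin n → ZMod 2) :
    Nat.card ↥{z : Fin n → ZMod 2 | IsSol A b z} = Nat.card ↥(perp (Lset A b)) := by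
  obtain ⟨z₀, hz₀⟩ := exists_isSol A b
  exact Nat.card_congr ((Equiv.subRight z₀).subtypeEquiv (isSol_iff_sub_mem_perp A b hz₀))

/-- The number of solutions of the Hidden Linear Function problem
for q equals the cardinality of the orthogonal complement of L_q. -/
theorem card_solutions_eq_card_perp (n : ℕ) (hn : 1 ≤ n)
    (A : Fin n → Fin n → ZMod 2) (b : Fin n → ZMod 2) :
    Nat.card ↥{z : Fin n → ZMod 2 | IsSol A b z} = Nat.card ↥(perp (Lset A b)) :=
  card_solutions_eq_card_perp_general n A b
end

section
/- For every z ∈ F_2^n: if z is a solution of the Hidden Linear Function problem for q then |Γ(F_2^n, z)|^2 = 4^n / |L_q^⊥|, and otherwise Γ(F_2^n, z) = 0. (Equivalently, the distribution p(z) = |Γ(F_2^n, z)|^2 / 4^n is the uniform distribution on the set of all solutions.) -/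
open Finset

/-- The partial Fourier transform Γ(L, z). -/
noncomputable def Gamma {n : ℕ} (A : Fin n → Fin n → ZMod 2) (b : Fin n → ZMod 2)
    (L : Set (Fin n → ZMod 2)) (z : Fin n → ZMod 2) : ℂ :=
  ∑ x ∈ (Set.toFinite L).toFinset,
    (-1 : ℂ) ^ (ip z x).val * Complex.I ^ (quadForm A b x).val

/-! Write the summand of `Γ(F_2^n, z)` as the phase `F x = i ^ (2 z·x + q x)`. Polarising `q` gives
`F (w + y) = F w * F y * (-1) ^ B(w, y)` for a bilinear form `B` over `F_2` whose radical is `L_q`.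
Expanding `|Γ|² = Σ_{x,y} F x * conj (F y)` and substituting `x = w + y`, the sum over `y` of
`(-1) ^ B(w, y)` vanishes unless `w ∈ L_q`, so `|Γ|² = 2^n Σ_{w ∈ L_q} F w`. On `L_q` the phase is
a character, trivial exactly when `z` solves the HLF problem; its sum is `|L_q|` or `0`.
Finally `|L_q| |L_q^⊥| = 2^n`. -/

open scoped ComplexConjugate

section QuadraticPhase

variable {G : Type*} [AddCommGroup G] [Fintype G]

theorem sum_mul_conj_sum_eq_card_mul_sum_radical (F : G → ℂ) (β : G → AddChar G ℂ)
    (hF : ∀ x, ‖F x‖ = 1) (hadd : ∀ w y, F (w + y) = F w * F y * β w y)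
    [DecidablePred fun w => β w = 0] :
    (∑ x, F x) * conj (∑ x, F x) = Fintype.card G * ∑ w ∈ univ.filter (β · = 0), F w := by
  have shift : ∀ y, ∑ x, F x * conj (F y) = ∑ w, F w * β w y := fun y => by
    rw [← Fintype.sum_equiv (Equiv.addRight y) (fun w => F (w + y) * conj (F y)) _ fun _ => rfl]
    refine sum_congr rfl fun w _ => ?_
    rw [hadd, mul_right_comm, mul_assoc (F w), Complex.mul_conj', hF]
    simp
  calc (∑ x, F x) * conj (∑ x, F x) = ∑ y, ∑ x, F x * conj (F y) := by
        rw [map_sum, sum_mul_sum, sum_comm]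
    _ = ∑ w, F w * ∑ y, β w y := by simp_rw [shift, mul_sum]; exact sum_comm
    _ = Fintype.card G * ∑ w ∈ univ.filter (β · = 0), F w := by
        simp_rw [AddChar.sum_eq_ite, sum_filter, mul_sum, mul_ite, mul_zero]
        exact sum_congr rfl fun w _ => by split_ifs <;> ring

theorem norm_sq_sum_eq_card_mul_card_and_sum_eq_zero (F : G → ℂ) (β : G → AddChar G ℂ)
    (hF : ∀ x, ‖F x‖ = 1) (hadd : ∀ w y, F (w + y) = F w * F y * β w y)
    (K : AddSubgroup G) (hK : ∀ w, w ∈ K ↔ β w = 0) :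
    ((∀ w ∈ K, F w = 1) → ‖∑ x, F x‖ ^ 2 = Nat.card G * Nat.card K) ∧
      (¬ (∀ w ∈ K, F w = 1) → ∑ x, F x = 0) := by
  classical
  have hadd_K : ∀ w ∈ K, ∀ y, F (w + y) = F w * F y := fun w hw y => by
    rw [hadd, (hK w).1 hw, AddChar.zero_apply, mul_one]
  have hF0 : F 0 = 1 := by
    have h := hadd_K 0 K.zero_mem 0
    rw [add_zero] at h
    exact (mul_eq_left₀ (norm_ne_zero_iff.mp (by rw [hF]; exact one_ne_zero))).mp h.symm
  let ψ : AddChar K ℂ :=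
    { toFun := fun w => F w
      map_zero_eq_one' := hF0
      map_add_eq_mul' := fun w y => hadd_K w w.2 y }
  have hψ : ψ = 0 ↔ ∀ w ∈ K, F w = 1 := by
    simp [AddChar.ext_iff, ψ]
  have hrad : ∑ w ∈ univ.filter (β · = 0), F w = ∑ w, ψ w :=
    sum_subtype (p := (· ∈ K)) _ (fun w => by simp [hK w]) F
  have hsq : ((‖∑ x, F x‖ ^ 2 : ℝ) : ℂ) = Fintype.card G * ∑ w, ψ w := by
    rw [Complex.ofReal_pow, ← Complex.mul_conj', ← hrad]
    exact sum_mul_conj_sum_eq_card_mul_sum_radical F β hF hadd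
  simp only [AddChar.sum_eq_ite, ← Nat.card_eq_fintype_card] at hsq
  refine ⟨fun htriv => ?_, fun htriv => ?_⟩
  · rw [if_pos (hψ.2 htriv)] at hsq
    exact_mod_cast hsq
  · rw [if_neg (mt hψ.1 htriv), mul_zero, Complex.ofReal_eq_zero] at hsq
    exact norm_eq_zero.1 (pow_eq_zero_iff two_ne_zero |>.1 hsq)

end QuadraticPhase

theorem Submodule.natCard_mul_natCard_dotProduct_orthogonal {K ι : Type*} [Field K] [Finite K]
    [Fintype ι] [DecidableEq ι] (L : Submodule K (ι → K)) :
    Nat.card L * Nat.card {y : ι → K // ∀ x ∈ L, y ⬝ᵥ x = 0} = Nat.card K ^ Fintype.card ι := by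
  have e : {y : ι → K // ∀ x ∈ L, y ⬝ᵥ x = 0} ≃ L.dualAnnihilator :=
    (dotProductEquiv K ι).toEquiv.subtypeEquiv fun y => by
      rw [Submodule.mem_dualAnnihilator]; rfl
  rw [Nat.card_congr e, Module.natCard_eq_pow_finrank (K := K) (V := L),
    Module.natCard_eq_pow_finrank (K := K) (V := L.dualAnnihilator), ← pow_add,
    Subspace.finrank_add_finrank_dualAnnihilator_eq, Module.finrank_fintype_fun_eq_card]

noncomputable def iChar : AddChar (ZMod 4) ℂ := AddChar.zmodChar 4 Complex.I_pow_four

lemma iChar_apply (a : ZMod 4) : iChar a = Complex.I ^ a.val := rfl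

lemma iChar_eq_one_iff {a : ZMod 4} : iChar a = 1 ↔ a = 0 := by
  rw [iChar_apply, Complex.isPrimitiveRoot_I.pow_eq_one_iff_dvd, ← ZMod.natCast_eq_zero_iff,
    ZMod.natCast_zmod_val]

def doubleLift : ZMod 2 →+ ZMod 4 where
  toFun u := 2 * (u.val : ZMod 4)
  map_zero' := rfl
  map_add' := by decide

lemma doubleLift_apply (u : ZMod 2) : doubleLift u = 2 * (u.val : ZMod 4) := rfl

lemma doubleLift_eq_zero_iff {u : ZMod 2} : doubleLift u = 0 ↔ u = 0 := by
  revert u; decide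

lemma iChar_doubleLift (u : ZMod 2) : iChar (doubleLift u) = (-1) ^ u.val := by
  fin_cases u
  · rfl
  · show Complex.I ^ 2 = (-1) ^ 1
    simp

def polar {n : ℕ} (A : Fin n → Fin n → ZMod 2) (b : Fin n → ZMod 2) :
    (Fin n → ZMod 2) →ₗ[ZMod 2] (Fin n → ZMod 2) →ₗ[ZMod 2] ZMod 2 :=
  LinearMap.mk₂ (ZMod 2)
    (fun x y => ∑ p ∈ univ.filter (fun p : Fin n × Fin n => p.1 < p.2),
        A p.1 p.2 * (x p.1 * y p.2 + x p.2 * y p.1) + ∑ α, b α * (x α * y α))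
    (fun _ _ _ => by simp only [Pi.add_apply, add_mul, mul_add, sum_add_distrib]; abel)
    (fun _ _ _ => by
      simp only [Pi.smul_apply, smul_eq_mul, mul_add, mul_sum]
      congr 1 <;> exact sum_congr rfl fun _ _ => by ring)
    (fun _ _ _ => by simp only [Pi.add_apply, mul_add, sum_add_distrib]; abel)
    (fun _ _ _ => by
      simp only [Pi.smul_apply, smul_eq_mul, mul_add, mul_sum]
      congr 1 <;> exact sum_congr rfl fun _ _ => by ring)

lemma polar_apply {n : ℕ} (A : Fin n → Fin n → ZMod 2) (b : Fin n → ZMod 2)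
    (x y : Fin n → ZMod 2) :
    polar A b x y = ∑ p ∈ univ.filter (fun p : Fin n × Fin n => p.1 < p.2),
        A p.1 p.2 * (x p.1 * y p.2 + x p.2 * y p.1) + ∑ α, b α * (x α * y α) :=
  rfl

theorem quadForm_add {n : ℕ} (A : Fin n → Fin n → ZMod 2) (b : Fin n → ZMod 2)
    (x y : Fin n → ZMod 2) :
    quadForm A b (x + y) = quadForm A b x + quadForm A b y + doubleLift (polar A b x y) := by
  have offDiag : ∀ a u v u' v' : ZMod 2,
      2 * ((a.val : ZMod 4) * ((u + u').val : ZMod 4) * ((v + v').val : ZMod 4))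
        = 2 * ((a.val : ZMod 4) * (u.val : ZMod 4) * (v.val : ZMod 4))
          + 2 * ((a.val : ZMod 4) * (u'.val : ZMod 4) * (v'.val : ZMod 4))
          + doubleLift (a * (u * v' + v * u')) := by decide
  have diag : ∀ c u u' : ZMod 2,
      (c.val : ZMod 4) * ((u + u').val : ZMod 4)
        = (c.val : ZMod 4) * (u.val : ZMod 4) + (c.val : ZMod 4) * (u'.val : ZMod 4)
          + doubleLift (c * (u * u')) := by decide
  simp only [quadForm, polar_apply, Pi.add_apply, map_add, map_sum, mul_sum]
  rw [sum_congr rfl fun p _ => offDiag (A p.1 p.2) (x p.1) (x p.2) (y p.1) (y p.2),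
    sum_congr rfl fun α _ => diag (b α) (x α) (y α)]
  simp only [sum_add_distrib]
  abel

lemma mem_Lset_iff {n : ℕ} {A : Fin n → Fin n → ZMod 2} {b : Fin n → ZMod 2}
    {x : Fin n → ZMod 2} : x ∈ Lset A b ↔ polar A b x = 0 := by
  simp only [Lset, Set.mem_ofPred_eq, quadForm_add, add_eq_left, doubleLift_eq_zero_iff,
    LinearMap.ext_iff, LinearMap.zero_apply]

lemma Lset_eq_ker {n : ℕ} (A : Fin n → Fin n → ZMod 2) (b : Fin n → ZMod 2) :
    Lset A b = LinearMap.ker (polar A b) :=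
  Set.ext fun _ => mem_Lset_iff

lemma ip_add_right {n : ℕ} (z x y : Fin n → ZMod 2) : ip z (x + y) = ip z x + ip z y :=
  dotProduct_add z x y

noncomputable def phase {n : ℕ} (A : Fin n → Fin n → ZMod 2) (b : Fin n → ZMod 2)
    (z x : Fin n → ZMod 2) : ℂ :=
  iChar (doubleLift (ip z x) + quadForm A b x)

lemma Gamma_univ {n : ℕ} (A : Fin n → Fin n → ZMod 2) (b : Fin n → ZMod 2)
    (z : Fin n → ZMod 2) : Gamma A b Set.univ z = ∑ x, phase A b z x := by
  rw [Gamma, Set.Finite.toFinset_univ]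
  refine sum_congr rfl fun x _ => ?_
  rw [phase, AddChar.map_add_eq_mul, iChar_doubleLift, iChar_apply]

lemma phase_add {n : ℕ} (A : Fin n → Fin n → ZMod 2) (b : Fin n → ZMod 2)
    (z w y : Fin n → ZMod 2) :
    phase A b z (w + y) = phase A b z w * phase A b z y * iChar (doubleLift (polar A b w y)) := by
  simp only [phase, ← AddChar.map_add_eq_mul, ip_add_right, quadForm_add, map_add]
  abel_nf

lemma phase_eq_one_iff {n : ℕ} {A : Fin n → Fin n → ZMod 2} {b : Fin n → ZMod 2}
    {z x : Fin n → ZMod 2} : phase A b z x = 1 ↔ quadForm A b x = 2 * ((ip z x).val : ZMod 4) := by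
  rw [phase, iChar_eq_one_iff, doubleLift_apply]
  generalize ip z x = u
  generalize quadForm A b x = m
  revert u m
  decide

noncomputable def polarChar {n : ℕ} (A : Fin n → Fin n → ZMod 2) (b : Fin n → ZMod 2)
    (w : Fin n → ZMod 2) : AddChar (Fin n → ZMod 2) ℂ :=
  iChar.compAddMonoidHom (doubleLift.comp (polar A b w).toAddMonoidHom)

lemma polarChar_eq_zero_iff {n : ℕ} {A : Fin n → Fin n → ZMod 2} {b : Fin n → ZMod 2}
    {w : Fin n → ZMod 2} : polarChar A b w = 0 ↔ w ∈ LinearMap.ker (polar A b) := by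
  simp [AddChar.ext_iff, polarChar, iChar_eq_one_iff, doubleLift_eq_zero_iff, LinearMap.ext_iff]

lemma isSol_iff {n : ℕ} {A : Fin n → Fin n → ZMod 2} {b : Fin n → ZMod 2}
    {z : Fin n → ZMod 2} : IsSol A b z ↔ ∀ w ∈ LinearMap.ker (polar A b), phase A b z w = 1 := by
  simp only [IsSol, Lset_eq_ker, SetLike.mem_coe, phase_eq_one_iff]

theorem Gamma_full_space_general (n : ℕ)
    (A : Fin n → Fin n → ZMod 2) (b : Fin n → ZMod 2) (z : Fin n → ZMod 2) :
    (IsSol A b z →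
      (‖Gamma A b Set.univ z‖) ^ 2
        = 4 ^ n / (Nat.card ↥(perp (Lset A b)) : ℝ)) ∧
    (¬ IsSol A b z → Gamma A b Set.univ z = 0) := by
  obtain ⟨hsq, hzero⟩ := norm_sq_sum_eq_card_mul_card_and_sum_eq_zero (phase A b z)
    (polarChar A b) (fun _ => AddChar.norm_apply _ _) (phase_add A b z)
    (LinearMap.ker (polar A b)).toAddSubgroup fun _ => polarChar_eq_zero_iff.symm
  have hcard :
      Nat.card (LinearMap.ker (polar A b)).toAddSubgroup * Nat.card (perp (Lset A b)) = 2 ^ n := by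
    have h := (LinearMap.ker (polar A b)).natCard_mul_natCard_dotProduct_orthogonal
    rw [Nat.card_zmod, Fintype.card_fin] at h
    rw [Lset_eq_ker]
    exact h
  refine ⟨fun hsol => ?_, fun hsol => Gamma_univ A b z ▸ hzero (mt isSol_iff.2 hsol)⟩
  have hperp : (Nat.card (perp (Lset A b)) : ℝ) ≠ 0 :=
    Nat.cast_ne_zero.2 (right_ne_zero_of_mul (hcard ▸ pow_ne_zero n two_ne_zero))
  rw [Gamma_univ, hsq (isSol_iff.1 hsol), eq_div_iff hperp, mul_assoc]
  norm_cast
  rw [hcard, Nat.card_fun, Nat.card_zmod, Nat.card_fin, ← mul_pow]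
  norm_num

/-- If z is a solution of the Hidden Linear Function problem for q
then |Γ(F_2^n, z)|² = 4^n / |L_q^⊥|, and otherwise Γ(F_2^n, z) = 0; i.e. the
distribution p(z) = |Γ(F_2^n, z)|²/4^n is uniform on the set of solutions. -/
theorem Gamma_full_space (n : ℕ) (hn : 1 ≤ n)
    (A : Fin n → Fin n → ZMod 2) (b : Fin n → ZMod 2) (z : Fin n → ZMod 2) :
    (IsSol A b z →
      (‖Gamma A b Set.univ z‖) ^ 2
        = 4 ^ n / (Nat.card ↥(perp (Lset A b)) : ℝ)) ∧
    (¬ IsSol A b z → Gamma A b Set.univ z = 0) :=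
  Gamma_full_space_general n A b z
end
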